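/- arXiv:math/0503177 — 2 statements merged into one kernel-verified Lean document; each statement's English description precedes it below -/
import Mathlib

section
/- Suppose sequences of polynomials u'_n, v'_m, w'_{m,n} satisfy u'_n(q)·[m]_q + v'_m(q)·[n]_q + w'_{m,n}(q)·[m]_q·[n]_q = 0 for all positive integers m and n. If deg(u'_n(q)) < n - 1 for some n, then u'_n(q) = 0; and if deg(v'_m(q)) < m - 1 for some m, then v'_m(q) = 0. -/
open Polynomial Finset

noncomputable def qint (K : Type*) [Field K] (n : ℕ) : Polynomial K :=
  ∑ i ∈ Finset.range n, X ^ i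

lemma qint_coeff_zero (K : Type*) [Field K] (n : ℕ) (hn : 0 < n) :
    (qint K n).coeff 0 = 1 := by
  simp only [qint, finset_sum_coeff, coeff_X_pow]
  rw [Finset.sum_eq_single 0] <;> simp [Nat.pos_iff_ne_zero.mp hn]
  omega

lemma qint_degree (K : Type*) [Field K] (n : ℕ) (hn : 0 < n) :
    (qint K n).degree = (n - 1 : ℕ) := by
  apply le_antisymm
  · apply Polynomial.degree_sum_le _ _ |>.trans
    apply Finset.sup_le
    intro i hi
    rw [degree_X_pow]
    rw [Finset.mem_range] at hi
    exact_mod_cast Nat.le_sub_one_of_lt hi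
  · apply Polynomial.le_degree_of_ne_zero
    simp only [qint, finset_sum_coeff, coeff_X_pow]
    rw [Finset.sum_eq_single (n - 1)] <;> simp <;> omega

lemma qint_ne_zero (K : Type*) [Field K] (n : ℕ) (hn : 0 < n) : qint K n ≠ 0 := by
  intro h
  have := qint_coeff_zero K n hn
  rw [h] at this; simp at this

lemma qint_coprime_X (K : Type*) [Field K] (n : ℕ) (hn : 0 < n) :
    IsCoprime (qint K n) X := by
  rw [isCoprime_comm]
  apply Polynomial.irreducible_X.coprime_iff_not_dvd.mpr
  rw [Polynomial.X_dvd_iff, qint_coeff_zero K n hn]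
  exact one_ne_zero

lemma qint_coprime_succ (K : Type*) [Field K] (n : ℕ) (hn : 0 < n) :
    IsCoprime (qint K n) (qint K (n + 1)) := by
  have h1 : qint K (n + 1) = X ^ n + qint K n * 1 := by
    simp [qint, Finset.sum_range_succ, add_comm]
  rw [h1]
  exact ((qint_coprime_X K n hn).pow_right).add_mul_left_right 1

theorem stmt6 (K : Type*) [Field K] (u' v' : ℕ → Polynomial K)
    (w' : ℕ → ℕ → Polynomial K)
    (h : ∀ m n : ℕ, 0 < m → 0 < n →
      u' n * qint K m + v' m * qint K n + w' m n * qint K m * qint K n = 0) :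
    (∀ n : ℕ, 0 < n → (u' n).degree < (n - 1 : ℕ) → u' n = 0) ∧
    (∀ m : ℕ, 0 < m → (v' m).degree < (m - 1 : ℕ) → v' m = 0) := by
  have key : ∀ n : ℕ, 0 < n → (∀ m : ℕ, 0 < m → qint K n ∣ u' n * qint K m) →
      (u' n).degree < (n - 1 : ℕ) → u' n = 0 := by
    intro n hn hdvd hdeg
    have hdvd' : qint K n ∣ u' n :=
      (qint_coprime_succ K n hn).dvd_of_dvd_mul_right (hdvd (n + 1) n.succ_pos)
    by_contra hne
    have := Polynomial.degree_le_of_dvd hdvd' hne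
    rw [qint_degree K n hn] at this
    exact absurd (lt_of_le_of_lt this hdeg) (lt_irrefl _)
  constructor
  · intro n hn hdeg
    apply key n hn _ hdeg
    intro m hm
    have := h m n hm hn
    exact ⟨-(v' m + w' m n * qint K m), by linear_combination this⟩
  · intro m hm hdeg
    -- symmetric: qint K m ∣ v' m * qint K n
    have hdvd' : qint K m ∣ v' m :=
      (qint_coprime_succ K m hm).dvd_of_dvd_mul_right
        (by
          have := h m (m + 1) hm m.succ_pos
          exact ⟨-(u' (m+1) + w' m (m+1) * qint K (m+1)), by linear_combination this⟩)
    by_contra hne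
    have := Polynomial.degree_le_of_dvd hdvd' hne
    rw [qint_degree K m hm] at this
    exact absurd (lt_of_le_of_lt this hdeg) (lt_irrefl _)
end

section
/- Suppose a sequence of polynomials f_n(q) satisfies f_{m+n}(q) = f_m(q) + q^m·f_n(q) for all positive integers m and n. Then there exists a polynomial h(q) such that f_n(q) = [n]_q·h(q) for all n; conversely, for any h(q), the sequence f_n(q) = [n]_q·h(q) satisfies this functional equation. -/
open Polynomial Finset

lemma qint_add (K : Type*) [Field K] (m n : ℕ) :
    qint K (m + n) = qint K m + X ^ m * qint K n := by
  simp [qint, Finset.sum_range_add, Finset.mul_sum, pow_add]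

theorem stmt19 (K : Type*) [Field K] (f : ℕ → Polynomial K) :
    (∀ m n : ℕ, 0 < m → 0 < n → f (m + n) = f m + X ^ m * f n) ↔
    ∃ h : Polynomial K, ∀ n : ℕ, 0 < n → f n = qint K n * h := by
  constructor
  · intro hf
    refine ⟨f 1, ?_⟩
    intro n hn
    induction n with
    | zero => simp at hn
    | succ k ih =>
      rcases Nat.eq_zero_or_pos k with h0 | hk
      · subst h0; simp [qint]
      · rw [hf k 1 hk one_pos, ih hk, qint_add, add_mul]
        simp [qint]
  · rintro ⟨h, hh⟩ m n hm hn
    rw [hh _ (by omega), hh _ hm, hh _ hn, qint_add]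
    ring
end
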